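/- arXiv:math/0102104 — 3 statements merged into one kernel-verified Lean document; each statement's English description precedes it below -/
import Mathlib

section
/- For a finite simplicial complex L, let κ(L) = Σ_{i=-1}^{dim L} (-1/2)^{i+1} f_i(L), where f_i(L) is the number of i-simplices and f_{-1}(L) = 1. If L is the join L₁ ∗ L₂ of two finite simplicial complexes, then κ(L₁ ∗ L₂) = κ(L₁) · κ(L₂). -/
open Finset

/-- The number of `i`-dimensional simplices (simplices with `i+1` vertices). -/
def fcount {V : Type*} (K : Finset (Finset V)) (i : ℕ) : ℕ :=
  (K.filter fun s => s.card = i + 1).card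

/-- `κ(L) = Σ_{i=-1}^{dim L} (-1/2)^{i+1} f_i(L)`, with `f_{-1} = 1`. -/
def kappa {V : Type*} (K : Finset (Finset V)) : ℚ :=
  1 + ∑ i ∈ Finset.range (K.sup Finset.card), (-1/2 : ℚ) ^ (i + 1) * fcount K i

/-- A finite abstract simplicial complex: faces are nonempty and closed under
nonempty subsets. -/
def IsComplex {V : Type*} (K : Finset (Finset V)) : Prop :=
  (∀ s ∈ K, s.Nonempty) ∧ ∀ s ∈ K, ∀ t ⊆ s, t.Nonempty → t ∈ K

/-- The simplicial join: simplices are `σ ∗ τ` with `σ` a simplex of `K₁` or empty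
and `τ` a simplex of `K₂` or empty, not both empty. -/
def simpJoin {V₁ V₂ : Type*} [DecidableEq V₁] [DecidableEq V₂]
    (K₁ : Finset (Finset V₁)) (K₂ : Finset (Finset V₂)) : Finset (Finset (V₁ ⊕ V₂)) :=
  (((insert ∅ K₁) ×ˢ (insert ∅ K₂)).image
    fun p => p.1.image Sum.inl ∪ p.2.image Sum.inr).erase ∅

lemma kappa_eq_sum {V : Type*} [DecidableEq V] (K : Finset (Finset V)) (hne : ∀ s ∈ K, s.Nonempty) :
    kappa K = ∑ s ∈ insert ∅ K, (-1/2 : ℚ) ^ s.card := by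
  have h0 : (∅ : Finset V) ∉ K := fun h => by simpa using hne ∅ h
  rw [Finset.sum_insert h0]
  simp only [Finset.card_empty, pow_zero]
  rw [kappa]
  congr 1
  have key : ∑ x ∈ K, (-1/2 : ℚ) ^ x.card
      = ∑ i ∈ Finset.range (K.sup Finset.card),
          ∑ s ∈ K.filter (fun s => s.card - 1 = i), (-1/2 : ℚ) ^ s.card :=
    (Finset.sum_fiberwise_of_maps_to (fun s hs => by
        have h1 := (hne s hs).card_pos
        have h2 := Finset.le_sup (f := Finset.card) hs
        simp only [Finset.mem_range]; omega) _).symm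
  rw [key]
  apply Finset.sum_congr rfl
  intro i _
  have hfe : K.filter (fun s => s.card - 1 = i) = K.filter (fun s => s.card = i + 1) := by
    apply Finset.filter_congr
    intro s hs
    have := (hne s hs).card_pos
    omega
  rw [hfe, Finset.sum_congr rfl (fun s hs => by rw [(Finset.mem_filter.mp hs).2]),
    Finset.sum_const, nsmul_eq_mul, mul_comm, fcount]

/-- κ is multiplicative under simplicial joins. -/
theorem kappa_join {V₁ V₂ : Type*} [DecidableEq V₁] [DecidableEq V₂]
    (K₁ : Finset (Finset V₁)) (K₂ : Finset (Finset V₂))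
    (h₁ : IsComplex K₁) (h₂ : IsComplex K₂) :
    kappa (simpJoin K₁ K₂) = kappa K₁ * kappa K₂ := by
  set f : Finset V₁ × Finset V₂ → Finset (V₁ ⊕ V₂) :=
    fun p => p.1.image Sum.inl ∪ p.2.image Sum.inr with hf
  have hinj : Function.Injective f := by
    have hleft : ∀ p : Finset V₁ × Finset V₂,
        (f p).filter (fun x => x.isLeft) = p.1.image Sum.inl := by
      intro p; ext x; cases x <;> simp [hf]
    have hright : ∀ p : Finset V₁ × Finset V₂,
        (f p).filter (fun x => x.isRight) = p.2.image Sum.inr := by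
      intro p; ext x; cases x <;> simp [hf]
    intro p q hpq
    have e1 : (p.1.image Sum.inl : Finset (V₁ ⊕ V₂)) = q.1.image Sum.inl := by
      rw [← hleft p, ← hleft q, hpq]
    have e2 : (p.2.image Sum.inr : Finset (V₁ ⊕ V₂)) = q.2.image Sum.inr := by
      rw [← hright p, ← hright q, hpq]
    have := Finset.image_injective (f := (Sum.inl : V₁ → V₁ ⊕ V₂)) Sum.inl_injective e1
    have := Finset.image_injective (f := (Sum.inr : V₂ → V₁ ⊕ V₂)) Sum.inr_injective e2
    exact Prod.ext ‹_› ‹_›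
  have hcard : ∀ p : Finset V₁ × Finset V₂, (f p).card = p.1.card + p.2.card := by
    intro p
    rw [hf, Finset.card_union_of_disjoint, Finset.card_image_of_injective _ Sum.inl_injective,
      Finset.card_image_of_injective _ Sum.inr_injective]
    simp [Finset.disjoint_left]
  have hins : insert (∅ : Finset (V₁ ⊕ V₂)) (simpJoin K₁ K₂)
      = ((insert ∅ K₁) ×ˢ (insert ∅ K₂)).image f := by
    rw [simpJoin, Finset.insert_erase]
    exact Finset.mem_image.mpr ⟨(∅, ∅), by simp, by simp [hf]⟩
  rw [kappa_eq_sum _ (fun s hs => Finset.nonempty_iff_ne_empty.mpr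
        (Finset.ne_of_mem_erase (by rw [simpJoin] at hs; exact hs))),
    kappa_eq_sum _ h₁.1, kappa_eq_sum _ h₂.1, hins,
    Finset.sum_image (fun p _ q _ h => hinj h)]
  rw [Finset.sum_product, Finset.sum_mul]
  apply Finset.sum_congr rfl
  intro σ _
  rw [Finset.mul_sum]
  apply Finset.sum_congr rfl
  intro τ _
  rw [hcard (σ, τ), pow_add]
end

section
/- Let O^{n-1} be the boundary of the n-dimensional octahedron, with vertex set {±e₁,…,±e_n}, and for a top-dimensional simplex spanned by {λ₁e₁,…,λ_n e_n} (λ_i ∈ {±1}) let n(λ) be the number of indices with λ_i = -1. For 0 ≤ l ≤ n-1, let B(l) be the union of the (n-1)-simplices with n(λ) ≤ l. Then B(l) collapses onto B(l-1) for each l ≥ 1; in particular B(l) is contractible (a topological ball). -/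
open Finset

/-- An elementary collapse: remove a free pair `(τ, σ)`, where `σ` is the unique
face properly containing `τ` and `dim σ = dim τ + 1`. -/
def ElemCollapse {V : Type*} [DecidableEq V] (K K' : Finset (Finset V)) : Prop :=
  ∃ τ σ : Finset V, τ ∈ K ∧ σ ∈ K ∧ τ ⊆ σ ∧ τ ≠ σ ∧ σ.card = τ.card + 1 ∧
    (∀ ρ ∈ K, τ ⊆ ρ → ρ = τ ∨ ρ = σ) ∧ K' = (K.erase σ).erase τ

/-- `K` collapses onto `K'`: a finite sequence of elementary collapses. -/
def Collapses {V : Type*} [DecidableEq V] (K K' : Finset (Finset V)) : Prop :=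
  Relation.ReflTransGen ElemCollapse K K'

/-- The top-dimensional simplex of `O^{n-1}` corresponding to the sign vector `lam`
(`true ↔ +1`, `false ↔ -1`): the set `{λ₁e₁, …, λ_ne_n}`. -/
noncomputable def topSimp (n : ℕ) (lam : Fin n → Bool) : Finset (Fin n × Bool) :=
  Finset.univ.image fun i => (i, lam i)

/-- `B(l)`: the union of the closed `(n-1)`-simplices of `O^{n-1}` whose sign
vector has at most `l` minus signs. -/
noncomputable def Bset (n : ℕ) (l : ℕ) : Finset (Finset (Fin n × Bool)) := by
  classical
  exact Finset.univ.powerset.filter fun s => s.Nonempty ∧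
    ∃ lam : Fin n → Bool,
      (Finset.univ.filter fun i => lam i = false).card ≤ l ∧ s ⊆ topSimp n lam

/-!
The faces of `B(l)` not in `B(l-1)` are those with exactly `l` minus signs. Since `l < n`, such a
face `s` misses some index altogether; let `j` be the least index not carrying a minus sign in `s`.
It depends only on the minus signs of `s`, so the faces are matched in pairs `s.erase (+e_j)`,
`insert (+e_j) s`. Removing these pairs in order of decreasing size of the larger face is a
sequence of elementary collapses: a face `ρ` of the current complex containing `σ.erase (+e_j)`
has the same minus signs as `σ`, hence the same `j`, and `insert (+e_j) ρ ⊇ σ` has no more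
vertices than `σ` because the larger pairs are already gone; so `ρ` lies between
`σ.erase (+e_j)` and `σ`.
-/

section Collapse

variable {V : Type*} [DecidableEq V]

theorem collapses_union_image_of_freeFaces {L S : Finset (Finset V)} {f : Finset V → Finset V}
    (hsub : ∀ σ ∈ S, f σ ⊆ σ) (hcard : ∀ σ ∈ S, σ.card = (f σ).card + 1)
    (hfree : ∀ σ ∈ S, ∀ ρ ∈ L ∪ S ∪ S.image f, f σ ⊆ ρ → ρ = f σ ∨ ρ = σ)
    (hLS : Disjoint L S) (hLf : Disjoint L (S.image f)) (hSf : Disjoint S (S.image f))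
    (hinj : Set.InjOn f S) :
    Collapses (L ∪ S ∪ S.image f) L := by
  suffices ∀ T ⊆ S, Collapses (L ∪ T ∪ T.image f) L from this S subset_rfl
  intro T
  induction T using Finset.induction_on with
  | empty =>
    intro
    simp only [image_empty, union_empty]
    exact Relation.ReflTransGen.refl
  | @insert a T haT ih =>
    intro hT
    have ha : a ∈ S := hT (mem_insert_self a T)
    have hTS : T ⊆ S := (subset_insert a T).trans hT
    have haL : a ∉ L := disjoint_right.1 hLS ha
    have hfaL : f a ∉ L := disjoint_right.1 hLf (mem_image_of_mem f ha)
    have hfaT : f a ∉ T := fun h => disjoint_right.1 hSf (mem_image_of_mem f ha) (hTS h)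
    have hafT : a ∉ T.image f := fun h => disjoint_left.1 hSf ha (image_subset_image hTS h)
    have hfafT : f a ∉ T.image f := by
      rw [mem_image]
      rintro ⟨b, hb, hfb⟩
      exact haT (hinj (hTS hb) ha hfb ▸ hb)
    have hne : f a ≠ a := fun h => by have := hcard a ha; rw [h] at this; omega
    refine Relation.ReflTransGen.head ⟨f a, a, ?_, ?_, hsub a ha, hne, hcard a ha, ?_, ?_⟩ (ih hTS)
    · simp
    · simp
    · intro ρ hρ
      exact hfree a ha ρ (union_subset_union (union_subset_union_right hT)
        (image_subset_image hT) hρ)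
    · ext x
      simp only [mem_union, mem_erase, mem_insert, image_insert]
      grind

theorem collapses_of_collapses_succ {F : ℕ → Finset (Finset V)} {a b : ℕ}
    (h : ∀ k ∈ Ico a b, Collapses (F (k + 1)) (F k)) (hab : a ≤ b) : Collapses (F b) (F a) := by
  induction b, hab using Nat.le_induction with
  | base => exact Relation.ReflTransGen.refl
  | succ b hab ih =>
    exact Relation.ReflTransGen.trans (h b (mem_Ico.2 ⟨hab, b.lt_succ_self⟩))
      (ih fun k hk => h k (Ico_subset_Ico_right b.le_succ hk))

theorem eq_erase_or_eq_of_erase_subset_of_subset {s ρ : Finset V} {a : V} (ha : a ∈ s)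
    (hs : s.erase a ⊆ ρ) (hρ : ρ ⊆ s) : ρ = s.erase a ∨ ρ = s := by
  by_cases haρ : a ∈ ρ
  · exact Or.inr (hρ.antisymm (insert_erase ha ▸ insert_subset haρ hs))
  · exact Or.inl ((subset_erase.2 ⟨hρ, haρ⟩).antisymm hs)

end Collapse

namespace Octahedron

variable {n : ℕ}

def negIndices (s : Finset (Fin n × Bool)) : Finset (Fin n) :=
  univ.filter fun i => (i, false) ∈ s

def AntipodalFree (s : Finset (Fin n × Bool)) : Prop :=
  ∀ i : Fin n, (i, true) ∈ s → (i, false) ∉ s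

@[simp]
theorem mem_negIndices {s : Finset (Fin n × Bool)} {i : Fin n} :
    i ∈ negIndices s ↔ (i, false) ∈ s := by
  simp [negIndices]

theorem negIndices_mono {s t : Finset (Fin n × Bool)} (h : s ⊆ t) :
    negIndices s ⊆ negIndices t :=
  fun _ hi => mem_negIndices.2 (h (mem_negIndices.1 hi))

@[simp]
theorem negIndices_insert_true (s : Finset (Fin n × Bool)) (j : Fin n) :
    negIndices (insert (j, true) s) = negIndices s := by
  ext; simp

@[simp]
theorem negIndices_erase_true (s : Finset (Fin n × Bool)) (j : Fin n) :
    negIndices (s.erase (j, true)) = negIndices s := by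
  ext; simp

theorem AntipodalFree.mono {s t : Finset (Fin n × Bool)} (ht : AntipodalFree t) (hst : s ⊆ t) :
    AntipodalFree s :=
  fun i hi hi' => ht i (hst hi) (hst hi')

theorem AntipodalFree.insert_true {s : Finset (Fin n × Bool)} {j : Fin n} (hs : AntipodalFree s)
    (hj : j ∉ negIndices s) : AntipodalFree (insert (j, true) s) := by
  intro i hi hi'
  rw [mem_insert] at hi hi'
  rcases hi with hi | hi
  · obtain rfl : i = j := congrArg Prod.fst hi
    simp_all
  · exact hs i hi (by simpa using hi')

theorem AntipodalFree.card_le {s : Finset (Fin n × Bool)} (hs : AntipodalFree s) : s.card ≤ n := by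
  have hinj : Set.InjOn Prod.fst (s : Set (Fin n × Bool)) := by
    rintro ⟨i, b⟩ hp ⟨i', b'⟩ hq (rfl : i = i')
    cases b <;> cases b' <;> simp_all [AntipodalFree]
  simpa using card_le_card_of_injOn Prod.fst (fun p _ => mem_univ p.1) hinj

theorem subset_topSimp_iff {s : Finset (Fin n × Bool)} {lam : Fin n → Bool} :
    s ⊆ topSimp n lam ↔ ∀ p ∈ s, lam p.1 = p.2 := by
  refine forall₂_congr fun p _ => ?_
  simp only [topSimp, mem_image, mem_univ, true_and]
  exact ⟨fun ⟨i, hi⟩ => hi ▸ rfl, fun h => ⟨p.1, Prod.ext rfl h⟩⟩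

theorem mem_Bset {l : ℕ} {s : Finset (Fin n × Bool)} :
    s ∈ Bset n l ↔ s.Nonempty ∧ AntipodalFree s ∧ (negIndices s).card ≤ l := by
  classical
  simp only [Bset, mem_filter, mem_powerset, subset_univ, true_and, subset_topSimp_iff]
  refine and_congr_right fun _ => ⟨?_, ?_⟩
  · rintro ⟨lam, hcard, hlam⟩
    refine ⟨fun i hi hi' => ?_, (card_le_card fun i hi => ?_).trans hcard⟩
    · simpa [hlam _ hi] using hlam _ hi'
    · simpa using hlam _ (mem_negIndices.1 hi)
  · rintro ⟨hs, hcard⟩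
    refine ⟨fun i => decide ((i, false) ∉ s), (card_le_card fun i hi => ?_).trans hcard, ?_⟩
    · simpa using hi
    · rintro ⟨i, (_ | _)⟩ hp
      · simpa using hp
      · simpa using hs i hp

section Pivot

variable [NeZero n]

def pivot (M : Finset (Fin n)) : Fin n :=
  if h : Mᶜ.Nonempty then Mᶜ.min' h else 0

theorem pivot_notMem {M : Finset (Fin n)} (hM : M.card < n) : pivot M ∉ M := by
  have h : Mᶜ.Nonempty := by
    rw [← card_pos, card_compl, Fintype.card_fin]
    omega
  simpa [pivot, h] using min'_mem _ h

def addPivot (s : Finset (Fin n × Bool)) : Finset (Fin n × Bool) :=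
  insert (pivot (negIndices s), true) s

def erasePivot (s : Finset (Fin n × Bool)) : Finset (Fin n × Bool) :=
  s.erase (pivot (negIndices s), true)

@[simp]
theorem negIndices_addPivot (s : Finset (Fin n × Bool)) : negIndices (addPivot s) = negIndices s :=
  negIndices_insert_true s _

@[simp]
theorem negIndices_erasePivot (s : Finset (Fin n × Bool)) :
    negIndices (erasePivot s) = negIndices s :=
  negIndices_erase_true s _

theorem addPivot_eq_self {s : Finset (Fin n × Bool)} (h : (pivot (negIndices s), true) ∈ s) :
    addPivot s = s :=
  insert_eq_self.2 h

theorem addPivot_erasePivot {s : Finset (Fin n × Bool)} (h : (pivot (negIndices s), true) ∈ s) :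
    addPivot (erasePivot s) = s := by
  rw [addPivot, negIndices_erasePivot, erasePivot, insert_erase h]

theorem erasePivot_addPivot {s : Finset (Fin n × Bool)} (h : (pivot (negIndices s), true) ∉ s) :
    erasePivot (addPivot s) = s := by
  rw [erasePivot, negIndices_addPivot, addPivot, erase_insert h]

theorem pivot_notMem_erasePivot (s : Finset (Fin n × Bool)) :
    (pivot (negIndices (erasePivot s)), true) ∉ erasePivot s := by
  rw [negIndices_erasePivot]
  exact notMem_erase _ _

theorem card_negIndices_lt_card_addPivot (s : Finset (Fin n × Bool)) :
    (negIndices s).card < (addPivot s).card := by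
  have hsub : insert (pivot (negIndices s), true) ((negIndices s).image (·, false)) ⊆ addPivot s :=
    insert_subset_insert _ fun p hp => by obtain ⟨i, hi, rfl⟩ := mem_image.1 hp; simpa using hi
  have hcard := card_le_card hsub
  rw [card_insert_of_notMem (by simp), card_image_of_injective _ fun i j h => by simpa using h]
    at hcard
  omega

theorem addPivot_mem_Bset {l : ℕ} {s : Finset (Fin n × Bool)} (hs : s ∈ Bset n l) (hl : l < n) :
    addPivot s ∈ Bset n l := by
  obtain ⟨-, hfree, hcard⟩ := mem_Bset.1 hs
  exact mem_Bset.2 ⟨insert_nonempty _ _, hfree.insert_true (pivot_notMem (by omega)),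
    by simpa using hcard⟩

theorem erasePivot_mem_Bset {l : ℕ} {s : Finset (Fin n × Bool)} (hs : s ∈ Bset n l)
    (hneg : (negIndices s).Nonempty) : erasePivot s ∈ Bset n l := by
  obtain ⟨-, hfree, hcard⟩ := mem_Bset.1 hs
  obtain ⟨i, hi⟩ := hneg
  refine mem_Bset.2 ⟨⟨(i, false), ?_⟩, hfree.mono (erase_subset _ _), by simpa using hcard⟩
  simpa [erasePivot] using hi

end Pivot

section Stage

variable [NeZero n] {l k : ℕ}

noncomputable def stage (l k : ℕ) : Finset (Finset (Fin n × Bool)) :=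
  (Bset n l).filter fun s => (negIndices s).card < l ∨ (addPivot s).card < k

noncomputable def pivotFaces (l k : ℕ) : Finset (Finset (Fin n × Bool)) :=
  (Bset n l).filter fun s =>
    (negIndices s).card = l ∧ (pivot (negIndices s), true) ∈ s ∧ s.card = k

theorem mem_stage {s : Finset (Fin n × Bool)} :
    s ∈ stage l k ↔ s ∈ Bset n l ∧ ((negIndices s).card < l ∨ (addPivot s).card < k) :=
  mem_filter

theorem mem_pivotFaces {s : Finset (Fin n × Bool)} :
    s ∈ pivotFaces l k ↔ s ∈ Bset n l ∧
      (negIndices s).card = l ∧ (pivot (negIndices s), true) ∈ s ∧ s.card = k :=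
  mem_filter

theorem stage_succ (hl : 1 ≤ l) (hln : l < n) (k : ℕ) :
    stage l (k + 1) = stage l k ∪ pivotFaces (n := n) l k ∪ (pivotFaces l k).image erasePivot := by
  ext s
  simp only [mem_union, mem_image, mem_stage, mem_pivotFaces]
  constructor
  · rintro ⟨hs, hlt⟩
    have hl' : (negIndices s).card ≤ l := (mem_Bset.1 hs).2.2
    by_cases hsk : (negIndices s).card < l ∨ (addPivot s).card < k
    · exact Or.inl (Or.inl ⟨hs, hsk⟩)
    by_cases hp : (pivot (negIndices s), true) ∈ s
    · refine Or.inl (Or.inr ⟨hs, by omega, hp, ?_⟩)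
      rw [← addPivot_eq_self hp]
      omega
    · refine Or.inr ⟨addPivot s, ⟨addPivot_mem_Bset hs hln, by simp; omega, ?_, by omega⟩,
        erasePivot_addPivot hp⟩
      simp [addPivot]
  · rintro ((⟨hs, hsk⟩ | ⟨hs, hneg, hp, hcard⟩) | ⟨σ, ⟨hσ, hneg, hp, hcard⟩, rfl⟩)
    · exact ⟨hs, by omega⟩
    · exact ⟨hs, Or.inr (by rw [addPivot_eq_self hp]; omega)⟩
    · refine ⟨erasePivot_mem_Bset hσ (card_pos.1 (by omega)), Or.inr ?_⟩
      rw [addPivot_erasePivot hp]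
      omega

theorem eq_erasePivot_or_eq_of_erasePivot_subset {σ ρ : Finset (Fin n × Bool)}
    (hσ : σ ∈ pivotFaces l k) (hρ : ρ ∈ stage l (k + 1)) (hσρ : erasePivot σ ⊆ ρ) :
    ρ = erasePivot σ ∨ ρ = σ := by
  obtain ⟨-, hnegσ, hp, hcard⟩ := mem_pivotFaces.1 hσ
  obtain ⟨hρB, hlt⟩ := mem_stage.1 hρ
  have hneg : negIndices ρ = negIndices σ := by
    have hsub : negIndices σ ⊆ negIndices ρ := by simpa using negIndices_mono hσρ
    exact (eq_of_subset_of_card_le hsub (by have := (mem_Bset.1 hρB).2.2; omega)).symm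
  have hσ_sub : σ ⊆ addPivot ρ := by
    rw [← addPivot_erasePivot hp, addPivot, addPivot, negIndices_erasePivot, hneg]
    exact insert_subset_insert _ hσρ
  have hρ_sub : ρ ⊆ σ := by
    rw [eq_of_subset_of_card_le hσ_sub (by rw [hneg] at hlt; omega)]
    exact subset_insert _ _
  exact eq_erase_or_eq_of_erase_subset_of_subset hp hσρ hρ_sub

theorem disjoint_stage_pivotFaces : Disjoint (stage l k) (pivotFaces (n := n) l k) := by
  refine disjoint_left.2 fun s hs hs' => ?_
  obtain ⟨-, hneg, hp, hcard⟩ := mem_pivotFaces.1 hs'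
  have := (mem_stage.1 hs).2
  rw [addPivot_eq_self hp] at this
  omega

theorem disjoint_stage_image_erasePivot :
    Disjoint (stage l k) ((pivotFaces (n := n) l k).image erasePivot) := by
  refine disjoint_left.2 fun s hs hs' => ?_
  obtain ⟨σ, hσ, rfl⟩ := mem_image.1 hs'
  obtain ⟨-, hneg, hp, hcard⟩ := mem_pivotFaces.1 hσ
  have := (mem_stage.1 hs).2
  rw [addPivot_erasePivot hp, negIndices_erasePivot] at this
  omega

theorem disjoint_pivotFaces_image_erasePivot :
    Disjoint (pivotFaces (n := n) l k) ((pivotFaces l k).image erasePivot) := by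
  refine disjoint_left.2 fun s hs hs' => ?_
  obtain ⟨σ, -, rfl⟩ := mem_image.1 hs'
  exact pivot_notMem_erasePivot σ (mem_pivotFaces.1 hs).2.2.1

theorem injOn_erasePivot :
    Set.InjOn (erasePivot (n := n)) ↑(pivotFaces (n := n) l k) :=
  Set.LeftInvOn.injOn (f₁' := addPivot) fun _ hσ => addPivot_erasePivot (mem_pivotFaces.1 hσ).2.2.1

theorem stage_succ_collapses (hl : 1 ≤ l) (hln : l < n) (k : ℕ) :
    Collapses (stage (n := n) l (k + 1)) (stage l k) := by
  have hp : ∀ σ ∈ pivotFaces (n := n) l k, (pivot (negIndices σ), true) ∈ σ :=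
    fun σ hσ => (mem_pivotFaces.1 hσ).2.2.1
  rw [stage_succ hl hln k]
  refine collapses_union_image_of_freeFaces (fun σ _ => erase_subset _ _)
    (fun σ hσ => (card_erase_add_one (hp σ hσ)).symm) (fun σ hσ ρ hρ => ?_)
    disjoint_stage_pivotFaces disjoint_stage_image_erasePivot
    disjoint_pivotFaces_image_erasePivot injOn_erasePivot
  rw [← stage_succ hl hln k] at hρ
  exact eq_erasePivot_or_eq_of_erasePivot_subset hσ hρ

theorem stage_eq_Bset (hln : l < n) : stage l (n + 1) = Bset n l := by
  refine filter_true_of_mem fun s hs => Or.inr (Nat.lt_succ_of_le ?_)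
  exact (mem_Bset.1 (addPivot_mem_Bset hs hln)).2.1.card_le

theorem stage_eq_Bset_pred (hl : 1 ≤ l) : stage l (l + 1) = Bset n (l - 1) := by
  ext s
  have := card_negIndices_lt_card_addPivot s
  simp only [mem_stage, mem_Bset]
  exact ⟨fun ⟨⟨hne, hfree, _⟩, _⟩ => ⟨hne, hfree, by omega⟩,
    fun ⟨hne, hfree, _⟩ => ⟨⟨hne, hfree, by omega⟩, Or.inl (by omega)⟩⟩

theorem Bset_collapses_pred (hl : 1 ≤ l) (hln : l < n) : Collapses (Bset n l) (Bset n (l - 1)) := by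
  rw [← stage_eq_Bset hln, ← stage_eq_Bset_pred hl]
  exact collapses_of_collapses_succ (fun k _ => stage_succ_collapses hl hln k) (by omega)

end Stage

theorem Bset_zero : Bset n 0 = (topSimp n fun _ => true).powerset.erase ∅ := by
  ext s
  simp only [mem_Bset, mem_erase, mem_powerset, subset_topSimp_iff, nonpos_iff_eq_zero,
    card_eq_zero, ← nonempty_iff_ne_empty, eq_empty_iff_forall_notMem, mem_negIndices]
  refine and_congr_right fun _ => ⟨fun ⟨_, hneg⟩ ⟨i, b⟩ hp => ?_, fun h => ⟨?_, ?_⟩⟩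
  · cases b
    · exact absurd hp (hneg i)
    · rfl
  · exact fun i _ hi' => by simpa using h _ hi'
  · exact fun i hi' => by simpa using h _ hi'

end Octahedron

open Octahedron

/-- In the boundary of the `n`-octahedron, `B(l)` collapses onto `B(l-1)` for
`1 ≤ l ≤ n-1`; in particular each `B(l)` collapses onto `B(0)`, which is a single
closed `(n-1)`-simplex (so `B(l)` is a ball). -/
theorem Bset_collapses (n : ℕ) (hn : 1 ≤ n) :
    (∀ l : ℕ, 1 ≤ l → l ≤ n - 1 → Collapses (Bset n l) (Bset n (l - 1))) ∧
    (∀ l : ℕ, l ≤ n - 1 → Collapses (Bset n l) (Bset n 0)) ∧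
    (∃ lam : Fin n → Bool, Bset n 0 = (topSimp n lam).powerset.erase ∅) := by
  have : NeZero n := ⟨by omega⟩
  have hpred : ∀ l : ℕ, 1 ≤ l → l ≤ n - 1 → Collapses (Bset n l) (Bset n (l - 1)) :=
    fun l hl hln => Bset_collapses_pred hl (by omega)
  refine ⟨hpred, fun l hl => ?_, ⟨_, Bset_zero⟩⟩
  exact collapses_of_collapses_succ
    (fun k hk => hpred (k + 1) (by omega) (by simp at hk; omega)) (Nat.zero_le l)
end

section
/- Let x₁, …, x_n be pairwise orthogonal nonzero vectors in an inner product space, and let y_n be the element of minimal norm among all linear combinations a₁x₁ + ⋯ + a_n x_n with a₁ + ⋯ + a_n = 1. Then 1/‖y_n‖² = Σ_{i=1}^n 1/‖x_i‖². Consequently, if the series Σ 1/‖x_i‖² diverges, then ‖y_n‖ → 0 as n → ∞. -/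
/-!
By Pythagoras, an affine combination `∑ aᵢ xᵢ` of orthogonal vectors has squared norm
`∑ aᵢ² ‖xᵢ‖²`, and Cauchy–Schwarz in Sedrakyan's form gives
`1 = (∑ aᵢ)² ≤ (∑ aᵢ² ‖xᵢ‖²) (∑ ‖xᵢ‖⁻²)`, with equality for `aᵢ ∝ ‖xᵢ‖⁻²`. So the minimal
squared norm is `(∑ ‖xᵢ‖⁻²)⁻¹`, which tends to `0` when the series diverges.
-/

open Finset Filter
open scoped InnerProductSpace

section AffineCombination

variable {ι E : Type*} [NormedAddCommGroup E] [InnerProductSpace ℝ E]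

def affineCombinations (s : Finset ι) (x : ι → E) : Set E :=
  {z | ∃ a : ι → ℝ, ∑ i ∈ s, a i = 1 ∧ z = ∑ i ∈ s, a i • x i}

variable {s : Finset ι} {x : ι → E}

theorem norm_sum_smul_sq_of_pairwise_inner_eq_zero
    (horth : (s : Set ι).Pairwise fun i j => ⟪x i, x j⟫_ℝ = 0) (a : ι → ℝ) :
    ‖∑ i ∈ s, a i • x i‖ ^ 2 = ∑ i ∈ s, a i ^ 2 * ‖x i‖ ^ 2 := by
  rw [← real_inner_self_eq_norm_sq, sum_inner]
  refine sum_congr rfl fun i hi => ?_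
  rw [inner_sum, sum_eq_single_of_mem i hi fun j hj hji => ?_]
  · rw [real_inner_smul_left, real_inner_smul_right, real_inner_self_eq_norm_sq]
    ring
  · rw [real_inner_smul_left, real_inner_smul_right, horth hi hj hji.symm]
    ring

theorem inv_sum_inv_norm_sq_le_norm_sq_of_mem_affineCombinations
    (horth : (s : Set ι).Pairwise fun i j => ⟪x i, x j⟫_ℝ = 0) (hne : ∀ i ∈ s, x i ≠ 0)
    {z : E} (hz : z ∈ affineCombinations s x) :
    (∑ i ∈ s, (‖x i‖ ^ 2)⁻¹)⁻¹ ≤ ‖z‖ ^ 2 := by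
  obtain ⟨a, ha, rfl⟩ := hz
  have titu := sq_sum_div_le_sum_sq_div s a (g := fun i => (‖x i‖ ^ 2)⁻¹)
    fun i hi => by have := norm_pos_iff.2 (hne i hi); positivity
  rw [ha, one_pow, one_div] at titu
  simpa only [norm_sum_smul_sq_of_pairwise_inner_eq_zero horth, div_inv_eq_mul] using titu

theorem exists_mem_affineCombinations_norm_sq_eq_inv_sum_inv_norm_sq
    (horth : (s : Set ι).Pairwise fun i j => ⟪x i, x j⟫_ℝ = 0) (hne : ∀ i ∈ s, x i ≠ 0)
    (hs : s.Nonempty) :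
    ∃ z ∈ affineCombinations s x, ‖z‖ ^ 2 = (∑ i ∈ s, (‖x i‖ ^ 2)⁻¹)⁻¹ := by
  set S := ∑ i ∈ s, (‖x i‖ ^ 2)⁻¹
  have hx : ∀ i ∈ s, 0 < ‖x i‖ ^ 2 := fun i hi => by
    have := norm_pos_iff.2 (hne i hi); positivity
  have hS : 0 < S := sum_pos (fun i hi => inv_pos.2 (hx i hi)) hs
  refine ⟨∑ i ∈ s, ((‖x i‖ ^ 2)⁻¹ / S) • x i, ⟨_, by rw [← sum_div, div_self hS.ne'], rfl⟩, ?_⟩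
  rw [norm_sum_smul_sq_of_pairwise_inner_eq_zero horth]
  calc ∑ i ∈ s, ((‖x i‖ ^ 2)⁻¹ / S) ^ 2 * ‖x i‖ ^ 2 = ∑ i ∈ s, (‖x i‖ ^ 2)⁻¹ / S ^ 2 :=
        sum_congr rfl fun i hi => by field_simp [(hx i hi).ne']
    _ = S⁻¹ := by rw [← sum_div, sq, div_mul_cancel_left₀ hS.ne']

theorem norm_sq_eq_inv_sum_inv_norm_sq_of_isMinOn
    (horth : (s : Set ι).Pairwise fun i j => ⟪x i, x j⟫_ℝ = 0) (hne : ∀ i ∈ s, x i ≠ 0)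
    (hs : s.Nonempty) {y : E} (hy : y ∈ affineCombinations s x)
    (hmin : IsMinOn norm (affineCombinations s x) y) :
    ‖y‖ ^ 2 = (∑ i ∈ s, (‖x i‖ ^ 2)⁻¹)⁻¹ := by
  obtain ⟨z, hz, hz_norm⟩ :=
    exists_mem_affineCombinations_norm_sq_eq_inv_sum_inv_norm_sq horth hne hs
  refine le_antisymm ?_ (inv_sum_inv_norm_sq_le_norm_sq_of_mem_affineCombinations horth hne hy)
  rw [← hz_norm]
  gcongr
  exact hmin hz

end AffineCombination

/-- Let `x₁, …, x_n` be pairwise orthogonal nonzero vectors and let `y n` be the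
minimal-norm affine combination (coefficients summing to 1) of `x₀, …, x_{n-1}`.
Then `1/‖y n‖² = Σ_{i<n} 1/‖x i‖²`; if `Σ 1/‖x i‖²` diverges then `‖y n‖ → 0`. -/
theorem minimal_norm_affine_combination {E : Type*}
    [NormedAddCommGroup E] [InnerProductSpace ℝ E] (x : ℕ → E)
    (horth : ∀ i j, i ≠ j → (inner ℝ (x i) (x j) : ℝ) = 0)
    (hne : ∀ i, x i ≠ 0) (y : ℕ → E)
    (hy : ∀ n, 1 ≤ n →
      (∃ a : ℕ → ℝ, (∑ i ∈ Finset.range n, a i) = 1 ∧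
        y n = ∑ i ∈ Finset.range n, a i • x i) ∧
      (∀ z : E, (∃ a : ℕ → ℝ, (∑ i ∈ Finset.range n, a i) = 1 ∧
        z = ∑ i ∈ Finset.range n, a i • x i) → ‖y n‖ ≤ ‖z‖)) :
    (∀ n, 1 ≤ n → 1 / ‖y n‖ ^ 2 = ∑ i ∈ Finset.range n, 1 / ‖x i‖ ^ 2) ∧
    (Tendsto (fun n => ∑ i ∈ Finset.range n, 1 / ‖x i‖ ^ 2) atTop atTop →
      Tendsto (fun n => ‖y n‖) atTop (nhds 0)) := by
  have norm_sq_eq : ∀ n, 1 ≤ n → ‖y n‖ ^ 2 = (∑ i ∈ range n, 1 / ‖x i‖ ^ 2)⁻¹ := fun n hn => by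
    simpa only [one_div] using norm_sq_eq_inv_sum_inv_norm_sq_of_isMinOn
      (fun i _ j _ hij => horth i j hij) (fun i _ => hne i) (nonempty_range_iff.2 (by omega))
      (hy n hn).1 (isMinOn_iff.2 (hy n hn).2)
  refine ⟨fun n hn => by rw [norm_sq_eq n hn, one_div, inv_inv], fun hdiv => ?_⟩
  have hsq : Tendsto (fun n => ‖y n‖ ^ 2) atTop (nhds 0) :=
    hdiv.inv_tendsto_atTop.congr' ((eventually_ge_atTop 1).mono fun n hn => (norm_sq_eq n hn).symm)
  simpa only [Real.sqrt_sq (norm_nonneg _), Real.sqrt_zero] using hsq.sqrt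
end
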